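/- arXiv:2206.08318 — 5 statements merged into one kernel-verified Lean document; each statement's English description precedes it below -/
import Mathlib

section
/- Let d, v_p, v_e be real numbers with d > 0 and 0 < v_p < v_e, and let θ ∈ [0, π]. Then there exists t > 0 with (v_e² − v_p²)·t² − 2·d·v_e·cos(θ)·t + d² ≤ 0 if and only if v_e·sin(θ) ≤ v_p and θ < π/2. (This quadratic feasibility criterion is the algebraic content of the paper's interception lemma: a pursuer at distance d from the evader's starting point, at angle θ from the evader's direction of travel, can intercept the evader exactly when sin(θ) ≤ v_p/v_e and the angle is acute.) -/
/-!
With `a = v_e² - v_p² > 0` and `b = d v_e cos θ`, the quadratic `a t² - 2 b t + d²` is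
nonpositive somewhere on `t > 0` iff its vertex `b / a` is positive and its discriminant
`b² - a d²` is nonnegative. The first condition is `cos θ > 0`, i.e. `θ < π/2`; by
`sin² θ + cos² θ = 1` the second is `v_e² sin² θ ≤ v_p²`, i.e. `v_e sin θ ≤ v_p`.
-/

open Real

theorem exists_pos_quadratic_nonpos_iff {a b c : ℝ} (ha : 0 < a) (hc : 0 < c) :
    (∃ t > 0, a * t ^ 2 - 2 * b * t + c ≤ 0) ↔ 0 < b ∧ a * c ≤ b ^ 2 := by
  constructor
  · rintro ⟨t, ht, hq⟩
    have hb : 0 < b := by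
      by_contra! hb
      nlinarith [mul_pos ha (pow_pos ht 2), mul_nonneg (neg_nonneg.mpr hb) ht.le]
    exact ⟨hb, by nlinarith [sq_nonneg (a * t - b)]⟩
  · rintro ⟨hb, hdisc⟩
    refine ⟨b / a, div_pos hb ha, ?_⟩
    have hmin : a * (b / a) ^ 2 - 2 * b * (b / a) + c = c - b ^ 2 / a := by
      field_simp
      ring
    rw [hmin, sub_nonpos, le_div_iff₀ ha, mul_comm]
    exact hdisc

theorem Real.cos_pos_iff_lt_pi_div_two {θ : ℝ} (hθ₀ : -(π / 2) < θ) (hθ₁ : θ ≤ π + π / 2) :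
    0 < cos θ ↔ θ < π / 2 := by
  refine ⟨fun hcos => ?_, fun hθ => cos_pos_of_mem_Ioo ⟨hθ₀, hθ⟩⟩
  by_contra! hθ
  exact (cos_nonpos_of_pi_div_two_le_of_le hθ hθ₁).not_gt hcos

theorem Real.mul_sin_le_iff_sub_sq_le_sq_mul_cos {v w θ : ℝ} (hw : 0 ≤ w) (hv : 0 ≤ v * sin θ) :
    v * sin θ ≤ w ↔ v ^ 2 - w ^ 2 ≤ (v * cos θ) ^ 2 := by
  have hpyth : (v * sin θ) ^ 2 + (v * cos θ) ^ 2 = v ^ 2 := by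
    rw [mul_pow, mul_pow, ← mul_add, sin_sq_add_cos_sq, mul_one]
  rw [← pow_le_pow_iff_left₀ hv hw two_ne_zero]
  constructor <;> intro h <;> linarith

/-- Quadratic feasibility criterion for interception: for `d > 0`, `0 < v_p < v_e`,
`θ ∈ [0, π]`, there is `t > 0` with
`(v_e² − v_p²)·t² − 2·d·v_e·cos θ·t + d² ≤ 0` iff `v_e·sin θ ≤ v_p` and `θ < π/2`. -/
theorem interception_quadratic_feasible (d vp ve θ : ℝ) (hd : 0 < d)
    (hvp : 0 < vp) (hv : vp < ve) (hθ : θ ∈ Set.Icc 0 Real.pi) :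
    (∃ t > 0, (ve ^ 2 - vp ^ 2) * t ^ 2 - 2 * d * ve * Real.cos θ * t + d ^ 2 ≤ 0) ↔
      (ve * Real.sin θ ≤ vp ∧ θ < Real.pi / 2) := by
  obtain ⟨hθ₀, hθπ⟩ := hθ
  have hve : 0 < ve := hvp.trans hv
  have ha : 0 < ve ^ 2 - vp ^ 2 := by nlinarith
  have hquad := exists_pos_quadratic_nonpos_iff (b := d * ve * cos θ) ha (pow_pos hd 2)
  simp only [← mul_assoc] at hquad
  have hsin : 0 ≤ ve * sin θ := mul_nonneg hve.le (sin_nonneg_of_nonneg_of_le_pi hθ₀ hθπ)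
  rw [hquad, and_comm]
  refine and_congr ?_ ?_
  · rw [mul_sin_le_iff_sub_sq_le_sq_mul_cos hvp.le hsin, show (d * ve * cos θ) ^ 2 =
      (ve * cos θ) ^ 2 * d ^ 2 by ring, mul_le_mul_iff_left₀ (pow_pos hd 2)]
  · rw [mul_pos_iff_of_pos_left (mul_pos hd hve),
      cos_pos_iff_lt_pi_div_two (by linarith [pi_pos]) (by linarith [pi_pos])]
end

section
/- Let P and R be points of the Euclidean plane ℝ² with R ≠ P, let u be a unit vector in ℝ², and let v_p, v_e be real numbers with 0 < v_p < v_e. Then there exists t > 0 such that dist(R, P + (v_e·t) • u) ≤ v_p·t if and only if the unoriented angle between the vectors u and R − P is at most arcsin(v_p/v_e). (This is the paper's interception lemma: a pursuer at R with speed v_p can intercept an evader that starts at P and moves with speed v_e in direction u exactly when the pursuer's direction from P makes an angle θ with u satisfying sin(θ) ≤ v_p/v_e, with θ acute.) -/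
/-!
Put `w = R - P`. Measuring time by the distance `s = v_e t` travelled by the evader, interception
means `‖w - s • u‖ ≤ k s` with `k = v_p / v_e`, i.e. `(1 - k²) s² - 2 ⟪u, w⟫ s + ‖w‖² ≤ 0`.
By AM-GM this quadratic has a positive root iff `√(1 - k²) ‖w‖ ≤ ⟪u, w⟫`, and since
`√(1 - k²) = cos (arcsin k)` and `⟪u, w⟫ = ‖w‖ cos (angle u w)`, this says
`angle u w ≤ arcsin k`.
-/

open Real InnerProductGeometry

theorem exists_pos_quadratic_nonpos_iff_s3 {r c d : ℝ} (hr : 0 < r) (hd : 0 < d) :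
    (∃ s > 0, r ^ 2 * s ^ 2 - 2 * c * s + d ^ 2 ≤ 0) ↔ r * d ≤ c := by
  constructor
  · rintro ⟨s, hs, hle⟩
    have amgm : 2 * (r * d) * s ≤ r ^ 2 * s ^ 2 + d ^ 2 := by nlinarith [sq_nonneg (r * s - d)]
    nlinarith
  · intro hc
    -- the double root of the quadratic when `c = r d`
    refine ⟨d / r, div_pos hd hr, ?_⟩
    have hvertex : r ^ 2 * (d / r) ^ 2 = d ^ 2 := by field_simp
    have hcross : d ^ 2 ≤ c * (d / r) := by
      calc d ^ 2 = r * d * (d / r) := by field_simp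
        _ ≤ c * (d / r) := by gcongr
    linarith

section InnerProductSpace

variable {E : Type*} [NormedAddCommGroup E] [InnerProductSpace ℝ E]

theorem norm_sub_smul_le_mul_iff {u w : E} (hu : ‖u‖ = 1) {k s : ℝ} (hk : 0 ≤ k) (hs : 0 ≤ s) :
    ‖w - s • u‖ ≤ k * s ↔ (1 - k ^ 2) * s ^ 2 - 2 * inner ℝ u w * s + ‖w‖ ^ 2 ≤ 0 := by
  rw [← sq_le_sq₀ (norm_nonneg _) (mul_nonneg hk hs), norm_sub_sq_real, real_inner_smul_right,
    real_inner_comm, norm_smul, hu, mul_one, norm_eq_abs, sq_abs, ← sub_nonpos]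
  constructor <;> intro h <;> linarith

theorem angle_le_arcsin_iff {u w : E} (hu : ‖u‖ = 1) (hw : w ≠ 0) {k : ℝ} (hk : 0 ≤ k) :
    angle u w ≤ arcsin k ↔ √(1 - k ^ 2) * ‖w‖ ≤ inner ℝ u w := by
  have harcsin : arcsin k ∈ Set.Icc 0 π :=
    ⟨arcsin_nonneg.2 hk, (arcsin_le_pi_div_two k).trans (by linarith [pi_pos])⟩
  rw [← strictAntiOn_cos.le_iff_ge harcsin ⟨angle_nonneg u w, angle_le_pi u w⟩, cos_arcsin,
    cos_angle, hu, one_mul, le_div_iff₀ (norm_pos_iff.2 hw)]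

theorem exists_pos_norm_sub_smul_le_iff_angle_le_arcsin {u w : E} (hu : ‖u‖ = 1) {k : ℝ}
    (hk : 0 ≤ k) (hk1 : k < 1) :
    (∃ s > 0, ‖w - s • u‖ ≤ k * s) ↔ angle u w ≤ arcsin k := by
  rcases eq_or_ne w 0 with rfl | hw
  · -- with Mathlib's convention `angle u 0 = π / 2`, both sides are false
    rw [angle_zero_right]
    refine iff_of_false ?_ (not_le.2 (arcsin_lt_pi_div_two.2 hk1))
    rintro ⟨s, hs, hle⟩
    rw [zero_sub, norm_neg, norm_smul, hu, mul_one, norm_of_nonneg hs.le] at hle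
    nlinarith
  have hr : 0 < √(1 - k ^ 2) := sqrt_pos.2 (by nlinarith)
  rw [angle_le_arcsin_iff hu hw hk, ← exists_pos_quadratic_nonpos_iff_s3 hr (norm_pos_iff.2 hw),
    sq_sqrt (by nlinarith)]
  exact exists_congr fun s ↦ and_congr_right fun hs ↦ norm_sub_smul_le_mul_iff hu hk hs.le

end InnerProductSpace

theorem interception_iff_angle_le_arcsin_general (P R : EuclideanSpace ℝ (Fin 2))
    (u : EuclideanSpace ℝ (Fin 2)) (hu : ‖u‖ = 1) (vp ve : ℝ)
    (hvp : 0 < vp) (hv : vp < ve) :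
    (∃ t > 0, dist R (P + (ve * t) • u) ≤ vp * t) ↔
      InnerProductGeometry.angle u (R - P) ≤ Real.arcsin (vp / ve) := by
  have hve : 0 < ve := hvp.trans hv
  rw [← exists_pos_norm_sub_smul_le_iff_angle_le_arcsin hu (div_pos hvp hve).le
    ((div_lt_one hve).2 hv)]
  have hdist (s : ℝ) : dist R (P + s • u) = ‖R - P - s • u‖ := by
    rw [dist_eq_norm, sub_add_eq_sub_sub]
  have hscale (t : ℝ) : vp / ve * (ve * t) = vp * t := by field_simp
  constructor
  · rintro ⟨t, ht, hle⟩
    exact ⟨ve * t, mul_pos hve ht, by rwa [← hdist, hscale]⟩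
  · rintro ⟨s, hs, hle⟩
    refine ⟨s / ve, div_pos hs hve, ?_⟩
    rwa [hdist, mul_div_cancel₀ s hve.ne', ← hscale, mul_div_cancel₀ s hve.ne']

/-- Interception lemma: a pursuer at `R` with speed `v_p` can intercept an evader
starting at `P` moving with speed `v_e` in unit direction `u` iff the unoriented angle
between `u` and `R − P` is at most `arcsin (v_p / v_e)`. -/
theorem interception_iff_angle_le_arcsin (P R : EuclideanSpace ℝ (Fin 2)) (hRP : R ≠ P)
    (u : EuclideanSpace ℝ (Fin 2)) (hu : ‖u‖ = 1) (vp ve : ℝ)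
    (hvp : 0 < vp) (hv : vp < ve) :
    (∃ t > 0, dist R (P + (ve * t) • u) ≤ vp * t) ↔
      InnerProductGeometry.angle u (R - P) ≤ Real.arcsin (vp / ve) :=
  interception_iff_angle_le_arcsin_general P R u hu vp ve hvp hv
end

section
/- Let P be a point of the Euclidean plane ℝ², let u be a unit vector in ℝ², and let v_p, v_e be real numbers with 0 < v_p < v_e. Then the interception region { R ∈ ℝ² : ∃ t ≥ 0, dist(R, P + (v_e·t) • u) ≤ v_p·t } is equal to the cone { R ∈ ℝ² : √(1 − (v_p/v_e)²) · ‖R − P‖ ≤ ⟪R − P, u⟫ }. (This makes precise the paper's claim that the region from which a pursuer can block a straight-line lane is a cone whose apex is the state from which the evader starts, with half-angle arcsin(v_p/v_e).) -/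
/-!
Write `x = R - P`, `c = ⟪x, u⟫`, `k = v_p / v_e` and measure time by the distance `s = v_e t`
travelled by the evader. Squaring, interception at time `s` means
`(1 - k²) s² - 2 c s + ‖x‖² ≤ 0`. Such an `s ≥ 0` exists iff the vertex `s = c / (1 - k²)`
works, i.e. iff `c ≥ 0` and `(1 - k²) ‖x‖² ≤ c²`, which is the cone condition.
-/

open Real

lemma exists_nonneg_quadratic_nonpos_iff {a c n : ℝ} (ha : 0 < a) (hcn : |c| ≤ n) :
    (∃ s ≥ 0, a * s ^ 2 - 2 * s * c + n ^ 2 ≤ 0) ↔ √a * n ≤ c := by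
  have hsqrt : √a ^ 2 = a := sq_sqrt ha.le
  constructor
  · rintro ⟨s, hs, hq⟩
    rcases hs.eq_or_lt with rfl | hs
    · have hn : n = 0 := by nlinarith [abs_nonneg c]
      have hc : c = 0 := abs_eq_zero.mp (le_antisymm (hn ▸ hcn) (abs_nonneg c))
      simp [hn, hc]
    · -- AM-GM: `a s² + n² ≥ 2 √a s n`
      nlinarith [sq_nonneg (√a * s - n)]
  · intro h
    have hc : 0 ≤ c := (mul_nonneg (sqrt_nonneg a) ((abs_nonneg c).trans hcn)).trans h
    refine ⟨c / a, div_nonneg hc ha.le, ?_⟩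
    have hcone : a * n ^ 2 ≤ c ^ 2 := by
      rw [← hsqrt, ← mul_pow]
      exact pow_le_pow_left₀ (mul_nonneg (sqrt_nonneg a) ((abs_nonneg c).trans hcn)) h 2
    have hvertex : a * (c / a) ^ 2 - 2 * (c / a) * c + n ^ 2 = n ^ 2 - c ^ 2 / a := by
      field_simp
      ring
    rw [hvertex, sub_nonpos, le_div_iff₀ ha]
    linarith

section InnerProductSpace

variable {E : Type*} [NormedAddCommGroup E] [InnerProductSpace ℝ E]

lemma norm_sub_smul_sq_of_norm_eq_one {u : E} (hu : ‖u‖ = 1) (x : E) (s : ℝ) :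
    ‖x - s • u‖ ^ 2 = ‖x‖ ^ 2 - 2 * s * inner ℝ x u + s ^ 2 := by
  rw [norm_sub_sq_real, real_inner_smul_right, norm_smul, hu, norm_eq_abs, mul_one, sq_abs]
  ring

lemma exists_norm_sub_smul_le_mul_iff {u : E} (hu : ‖u‖ = 1) (x : E) {k : ℝ} (hk0 : 0 ≤ k)
    (hk1 : k < 1) :
    (∃ s ≥ 0, ‖x - s • u‖ ≤ k * s) ↔ √(1 - k ^ 2) * ‖x‖ ≤ inner ℝ x u := by
  have hcs : |inner ℝ x u| ≤ ‖x‖ := by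
    simpa [hu] using abs_real_inner_le_norm x u
  rw [← exists_nonneg_quadratic_nonpos_iff (by nlinarith) hcs]
  refine exists_congr fun s => and_congr_right fun hs => ?_
  rw [← pow_le_pow_iff_left₀ (norm_nonneg _) (mul_nonneg hk0 hs) two_ne_zero,
    norm_sub_smul_sq_of_norm_eq_one hu]
  constructor <;> intro h <;> linarith

end InnerProductSpace

/-- The interception region of a straight-line lane is a cone with apex `P` and
half-angle `arcsin (v_p / v_e)`. -/
theorem interception_region_eq_cone (P u : EuclideanSpace ℝ (Fin 2)) (hu : ‖u‖ = 1)
    (vp ve : ℝ) (hvp : 0 < vp) (hv : vp < ve) :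
    {R : EuclideanSpace ℝ (Fin 2) | ∃ t ≥ 0, dist R (P + (ve * t) • u) ≤ vp * t} =
      {R : EuclideanSpace ℝ (Fin 2) |
        Real.sqrt (1 - (vp / ve) ^ 2) * ‖R - P‖ ≤ (inner ℝ (R - P) u : ℝ)} := by
  have hve : 0 < ve := hvp.trans hv
  ext R
  simp only [Set.mem_ofPred_eq]
  rw [← exists_norm_sub_smul_le_mul_iff hu (R - P) (div_pos hvp hve).le
    ((div_lt_one hve).mpr hv)]
  have hdist (t : ℝ) : dist R (P + (ve * t) • u) = ‖R - P - (ve * t) • u‖ := by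
    rw [dist_eq_norm, sub_add_eq_sub_sub]
  have hspeed (t : ℝ) : vp * t = vp / ve * (ve * t) := by
    field_simp
  constructor
  · rintro ⟨t, ht, hle⟩
    exact ⟨ve * t, mul_nonneg hve.le ht, by rwa [hdist, hspeed] at hle⟩
  · rintro ⟨s, hs, hle⟩
    refine ⟨s / ve, div_nonneg hs hve.le, ?_⟩
    rwa [hdist, hspeed, mul_div_cancel₀ s hve.ne']
end

section
/- Let n ≥ 3 be a natural number and, for 0 ≤ k ≤ n−1, let p_k = exp(2πik/n) ∈ ℂ be the n-th roots of unity, viewed as the vertices of a regular n-gon on the unit circle in the Euclidean plane ℂ. Then for every j with 1 ≤ j ≤ n−2, the unoriented angle ∠ p_j p_0 p_{j+1} at the vertex p_0 between the directions toward p_j and toward p_{j+1} equals π/n. (This is the paper's claim that when the states are placed equidistantly on a circle, the angle between adjacent moving directions of the evader at any state is π/n.) -/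
/-!
Each chord from `1` to `exp (2θi)` with `0 < θ < π` has direction `i · exp (θi)`, since
`exp (2θi) - 1 = 2 sin θ · i · exp (θi)` and `sin θ > 0`. So the angle at `1` between two
such chords is the angle between `exp (αi)` and `exp (βi)`, namely `|α - β|`; for the chords
to `p j` and `p (j+1)` this is `|πj/n - π(j+1)/n| = π/n`.
-/

open EuclideanGeometry Real

namespace Complex

lemma exp_two_mul_mul_I_sub_one (θ : ℝ) :
    exp (2 * θ * I) - 1 = (2 * Real.sin θ) • (I * exp (θ * I)) := by
  have hsq := sin_sq_add_cos_sq (θ : ℂ)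
  rw [show 2 * (θ : ℂ) * I = θ * I + θ * I by ring, exp_add, exp_mul_I, real_smul]
  push_cast [ofReal_sin]
  linear_combination hsq - sin (θ : ℂ) ^ 2 * I_sq

lemma angle_exp_two_mul_mul_I_sub_one {α β : ℝ} (hα₀ : 0 < α) (hα : α < π)
    (hβ₀ : 0 < β) (hβ : β < π) :
    InnerProductGeometry.angle (exp (2 * α * I) - 1) (exp (2 * β * I) - 1) = |α - β| := by
  have hmod : toIocMod two_pi_pos (-π) (α - β) = α - β :=
    toIocMod_eq_self _ |>.2 ⟨by linarith, by linarith⟩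
  have hsinα := sin_pos_of_pos_of_lt_pi hα₀ hα
  have hsinβ := sin_pos_of_pos_of_lt_pi hβ₀ hβ
  rw [exp_two_mul_mul_I_sub_one, exp_two_mul_mul_I_sub_one,
    InnerProductGeometry.angle_smul_left_of_pos _ _ (by positivity),
    InnerProductGeometry.angle_smul_right_of_pos _ _ (by positivity),
    angle_mul_left I_ne_zero, angle_exp_exp, hmod]

end Complex

theorem angle_adjacent_directions_regular_ngon_general (n : ℕ)
    (p : ℕ → ℂ) (hp : ∀ k, p k = Complex.exp (2 * Real.pi * Complex.I * k / n))
    (j : ℕ) (hj1 : 1 ≤ j) (hj2 : j ≤ n - 2) :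
    ∠ (p j) (p 0) (p (j + 1)) = Real.pi / n := by
  have hn₀ : (0 : ℝ) < n := by exact_mod_cast (show 0 < n by omega)
  have hp' : ∀ k : ℕ, p k = Complex.exp (2 * (π * k / n : ℝ) * Complex.I) := fun k => by
    rw [hp]; push_cast; ring_nf
  have hpos : ∀ k : ℕ, 1 ≤ k → 0 < π * k / n := fun k hk => by
    have : (1 : ℝ) ≤ k := by exact_mod_cast hk
    positivity
  have hlt : ∀ k : ℕ, k < n → π * k / n < π := fun k hk => by
    rw [div_lt_iff₀ hn₀]
    exact mul_lt_mul_of_pos_left (by exact_mod_cast hk) pi_pos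
  have hp₀ : p 0 = 1 := by simp [hp]
  rw [EuclideanGeometry.angle, vsub_eq_sub, vsub_eq_sub, hp₀, hp', hp',
    Complex.angle_exp_two_mul_mul_I_sub_one (hpos j hj1) (hlt j (by omega))
      (hpos (j + 1) (by omega)) (hlt (j + 1) (by omega))]
  rw [abs_sub_comm, ← sub_div, Nat.cast_succ, mul_add_one, add_sub_cancel_left,
    abs_of_pos (by positivity)]

/-- For the vertices `p k = exp(2πik/n)` of a regular `n`-gon on the unit circle in `ℂ`,
the unoriented angle at `p 0` between the directions toward `p j` and `p (j+1)` is `π/n`,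
for `1 ≤ j ≤ n − 2`. -/
theorem angle_adjacent_directions_regular_ngon (n : ℕ) (hn : 3 ≤ n)
    (p : ℕ → ℂ) (hp : ∀ k, p k = Complex.exp (2 * Real.pi * Complex.I * k / n))
    (j : ℕ) (hj1 : 1 ≤ j) (hj2 : j ≤ n - 2) :
    ∠ (p j) (p 0) (p (j + 1)) = Real.pi / n :=
  angle_adjacent_directions_regular_ngon_general n p hp j hj1 hj2
end

section
/- For every natural number n with n ≥ 7, one has 1/(2·sin(π/(2n))) − sin(π/(2n)) > 1. (This inequality is the crux of the paper's lemma that when n states are evenly placed on a circle and each pursuer has speed exactly v_e·sin(π/(2n)) — just sufficient to block a single state — the pursuers cannot win for n ≥ 7: the required formation-transition condition sin(γ) ≥ 1/(2·sin(π/(2n))) − sin(π/(2n)) is infeasible because the right-hand side exceeds 1.) -/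
open Real

lemma one_lt_one_div_two_mul_sub_self {s : ℝ} (hs : 0 < s) (hs_lt : s < 1 / 3) :
    1 < 1 / (2 * s) - s := by
  rw [lt_sub_iff_add_lt, lt_div_iff₀ (by positivity)]
  nlinarith

lemma sin_mem_Ioo_of_mem_Ioo {x : ℝ} (hx : x ∈ Set.Ioo 0 (1 / 3)) :
    sin x ∈ Set.Ioo 0 (1 / 3) :=
  ⟨sin_pos_of_pos_of_lt_pi hx.1 (by linarith [hx.2, pi_gt_three]),
    (sin_lt hx.1).trans hx.2⟩

lemma pi_div_two_mul_mem_Ioo {n : ℕ} (hn : 7 ≤ n) :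
    π / (2 * n) ∈ Set.Ioo 0 (1 / 3) := by
  have h14 : (14 : ℝ) ≤ 2 * n := by
    have : (7 : ℝ) ≤ n := by exact_mod_cast hn
    linarith
  refine ⟨by positivity, ?_⟩
  calc π / (2 * n) ≤ π / 14 := div_le_div_of_nonneg_left pi_pos.le (by norm_num) h14
    _ < 1 / 3 := by linarith [pi_lt_four]

/-- For `n ≥ 7`, `1/(2·sin(π/(2n))) − sin(π/(2n)) > 1`. -/
theorem formation_transition_infeasible (n : ℕ) (hn : 7 ≤ n) :
    1 / (2 * Real.sin (Real.pi / (2 * n))) - Real.sin (Real.pi / (2 * n)) > 1 := by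
  obtain ⟨hs_pos, hs_lt⟩ := sin_mem_Ioo_of_mem_Ioo (pi_div_two_mul_mem_Ioo hn)
  exact one_lt_one_div_two_mul_sub_self hs_pos hs_lt
end
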